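/- arXiv:0909.3253 — 2 statements merged into one kernel-verified Lean document; each statement's English description precedes it below -/
import Mathlib

section
/- Let X and Y be real normed vector spaces, let a ∈ X and 0 < r < ∞, and let f : X → Y be differentiable on the closed ball B̄(a,r) with derivative Df. Suppose γ ∈ [0,∞) is a Lipschitz constant for Df on B̄(a,r), i.e. ‖Df(x) − Df(y)‖ ≤ γ‖x − y‖ for all x, y ∈ B̄(a,r). Then for every positive integer Q and all points x₁, …, x_Q ∈ B̄(a,r) one has ‖(1/Q)·∑_{i=1}^Q f(x_i) − f((1/Q)·∑_{i=1}^Q x_i)‖ ≤ γ·r². -/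
/-! Let `R y = f y - f a - Df a (y - a)` be the first-order Taylor remainder at the centre.
As `f - R` is affine it commutes with averaging, so the averaged defect of `f` equals that of `R`,
which is at most twice the supremum of `‖R‖` on the ball. Integrating the Lipschitz bound on `Df`
along segments from `a` gives `‖R y‖ ≤ γ / 2 * ‖y - a‖ ^ 2 ≤ γ / 2 * r ^ 2`. -/

open Set

theorem norm_image_sub_le_of_norm_deriv_le_mul_segment_01 {E : Type*} [NormedAddCommGroup E]
    [NormedSpace ℝ E] {φ φ' : ℝ → E} {C : ℝ}
    (hφ : ∀ t ∈ Icc (0 : ℝ) 1, HasDerivWithinAt φ (φ' t) (Icc 0 1) t)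
    (bound : ∀ t ∈ Ico (0 : ℝ) 1, ‖φ' t‖ ≤ C * t) :
    ‖φ 1 - φ 0‖ ≤ C / 2 := by
  have hB : ∀ t, HasDerivAt (fun t : ℝ => C / 2 * t ^ 2) (C * t) t := fun t =>
    ((hasDerivAt_pow 2 t).const_mul (C / 2)).congr_deriv (by ring)
  have hfence := image_norm_le_of_norm_deriv_right_le_deriv_boundary (f := fun t => φ t - φ 0)
    (fun t ht => ((hφ t ht).sub_const (φ 0)).continuousWithinAt)
    (fun t ht => ((hφ t (Ico_subset_Icc_self ht)).sub_const (φ 0)).mono_of_mem_nhdsWithin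
      (Icc_mem_nhdsGE_of_mem ht)) (by simp) hB bound (right_mem_Icc.2 zero_le_one)
  simpa using hfence

theorem Convex.norm_sub_sub_fderiv_le_of_norm_fderiv_sub_le {X Y : Type*}
    [NormedAddCommGroup X] [NormedSpace ℝ X] [NormedAddCommGroup Y] [NormedSpace ℝ Y]
    {s : Set X} {f : X → Y} {f' : X → X →L[ℝ] Y} {a y : X} {γ : ℝ} (hs : Convex ℝ s)
    (hf : ∀ x ∈ s, HasFDerivWithinAt f (f' x) s x)
    (hlip : ∀ x ∈ s, ‖f' x - f' a‖ ≤ γ * ‖x - a‖) (ha : a ∈ s) (hy : y ∈ s) :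
    ‖f y - f a - f' a (y - a)‖ ≤ γ / 2 * ‖y - a‖ ^ 2 := by
  set p := (AffineMap.lineMap a y : ℝ → X)
  have hp : MapsTo p (Icc 0 1) s := hs.mapsTo_lineMap ha hy
  have hderiv : ∀ t ∈ Icc (0 : ℝ) 1, HasDerivWithinAt (fun t => f (p t) - t • f' a (y - a))
      ((f' (p t) - f' a) (y - a)) (Icc 0 1) t := fun t ht => by
    have hfp := (hf (p t) (hp ht)).comp_hasDerivWithinAt t AffineMap.hasDerivWithinAt_lineMap hp
    exact (hfp.sub ((hasDerivWithinAt_id t _).smul_const (f' a (y - a)))).congr_deriv (by simp)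
  have bound : ∀ t ∈ Ico (0 : ℝ) 1, ‖(f' (p t) - f' a) (y - a)‖ ≤ γ * ‖y - a‖ ^ 2 * t :=
    fun t ht => calc
      _ ≤ ‖f' (p t) - f' a‖ * ‖y - a‖ := (f' (p t) - f' a).le_opNorm _
      _ ≤ γ * ‖p t - a‖ * ‖y - a‖ := by gcongr; exact hlip _ (hp (Ico_subset_Icc_self ht))
      _ = γ * ‖y - a‖ ^ 2 * t := by
        simp [p, AffineMap.lineMap_apply_module', norm_smul, abs_of_nonneg ht.1]; ring
  have hsegment := norm_image_sub_le_of_norm_deriv_le_mul_segment_01 hderiv bound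
  simp only [p, AffineMap.lineMap_apply_one, AffineMap.lineMap_apply_zero, one_smul, zero_smul,
    sub_zero] at hsegment
  rw [sub_right_comm]; linarith

theorem Finset.sum_smul_sub_apply_sum_smul_eq {ι R M N : Type*} [Ring R] [AddCommGroup M]
    [Module R M] [AddCommGroup N] [Module R N] {t : Finset ι} {w : ι → R} (hw : ∑ i ∈ t, w i = 1)
    (f : M → N) (L : M →ₗ[R] N) (a : M) (x : ι → M) :
    ∑ i ∈ t, w i • f (x i) - f (∑ i ∈ t, w i • x i) =
      ∑ i ∈ t, w i • (f (x i) - f a - L (x i - a)) -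
        (f (∑ i ∈ t, w i • x i) - f a - L (∑ i ∈ t, w i • x i - a)) := by
  simp only [smul_sub, Finset.sum_sub_distrib, ← Finset.sum_smul, hw, one_smul, map_sub,
    ← map_smul, ← map_sum]
  abel

theorem Convex.norm_sum_smul_sub_apply_sum_smul_le {ι X Y : Type*}
    [NormedAddCommGroup X] [NormedSpace ℝ X] [NormedAddCommGroup Y] [NormedSpace ℝ Y]
    {s : Set X} (hs : Convex ℝ s) {f : X → Y} (L : X →ₗ[ℝ] Y) (a : X) {C : ℝ}
    (hrem : ∀ y ∈ s, ‖f y - f a - L (y - a)‖ ≤ C) {t : Finset ι} {w : ι → ℝ}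
    (hw₀ : ∀ i ∈ t, 0 ≤ w i) (hw₁ : ∑ i ∈ t, w i = 1) {x : ι → X} (hx : ∀ i ∈ t, x i ∈ s) :
    ‖∑ i ∈ t, w i • f (x i) - f (∑ i ∈ t, w i • x i)‖ ≤ 2 * C := by
  rw [Finset.sum_smul_sub_apply_sum_smul_eq hw₁ f L a]
  have hmean : ‖∑ i ∈ t, w i • (f (x i) - f a - L (x i - a))‖ ≤ C := calc
    _ ≤ ∑ i ∈ t, w i * C := by
      refine (norm_sum_le _ _).trans (Finset.sum_le_sum fun i hi => ?_)
      rw [norm_smul, Real.norm_of_nonneg (hw₀ i hi)]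
      exact mul_le_mul_of_nonneg_left (hrem _ (hx i hi)) (hw₀ i hi)
    _ = C := by rw [← Finset.sum_mul, hw₁, one_mul]
  have hcenter := hrem _ (hs.sum_mem hw₀ hw₁ hx)
  linarith [norm_sub_le (∑ i ∈ t, w i • (f (x i) - f a - L (x i - a)))
    (f (∑ i ∈ t, w i • x i) - f a - L (∑ i ∈ t, w i • x i - a))]

/-- If `f` is differentiable on a closed ball with derivative `Df`, and `Df` is
`γ`-Lipschitz on that ball, then the average of the values of `f` at `Q` points of the
ball differs from the value of `f` at the average point by at most `γ * r ^ 2`. -/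
theorem quasi_linear_estimate {X Y : Type*} [NormedAddCommGroup X] [NormedSpace ℝ X]
    [NormedAddCommGroup Y] [NormedSpace ℝ Y]
    (a : X) (r : ℝ) (hr : 0 < r) (f : X → Y) (Df : X → X →L[ℝ] Y)
    (hdiff : ∀ x ∈ Metric.closedBall a r,
      HasFDerivWithinAt f (Df x) (Metric.closedBall a r) x)
    (γ : ℝ) (hγ : 0 ≤ γ)
    (hlip : ∀ x ∈ Metric.closedBall a r, ∀ y ∈ Metric.closedBall a r,
      ‖Df x - Df y‖ ≤ γ * ‖x - y‖)
    (Q : ℕ) (hQ : 0 < Q) (x : Fin Q → X)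
    (hx : ∀ i, x i ∈ Metric.closedBall a r) :
    ‖(1 / (Q : ℝ)) • ∑ i, f (x i) - f ((1 / (Q : ℝ)) • ∑ i, x i)‖ ≤ γ * r ^ 2 := by
  have ha : a ∈ Metric.closedBall a r := Metric.mem_closedBall_self hr.le
  have hrem : ∀ y ∈ Metric.closedBall a r, ‖f y - f a - Df a (y - a)‖ ≤ γ / 2 * r ^ 2 :=
    fun y hy => calc
      _ ≤ γ / 2 * ‖y - a‖ ^ 2 :=
        (convex_closedBall a r).norm_sub_sub_fderiv_le_of_norm_fderiv_sub_le hdiff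
          (fun z hz => hlip z hz a ha) ha hy
      _ ≤ γ / 2 * r ^ 2 := by gcongr; exact mem_closedBall_iff_norm.1 hy
  have hw₁ : ∑ _i : Fin Q, 1 / (Q : ℝ) = 1 := by simp [hQ.ne']
  have hdefect := (convex_closedBall a r).norm_sum_smul_sub_apply_sum_smul_le
    (Df a : X →ₗ[ℝ] Y) a hrem (fun _ _ => by positivity) hw₁ (fun i _ => hx i)
  rw [Finset.smul_sum, Finset.smul_sum]
  linarith
end

section
/- There exists a universal constant Γ ∈ (0,∞) such that for every real R ≥ 2, ∫_{N ∩ B̄(0,R)} ( |q(z)| − log(2R) )² dℋ²(z) ≤ Γ·R². -/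
open MeasureTheory Metric

/-- The profile function of the catenoid-like surface: `f t = log (t + √(t² - 1))`. -/
noncomputable def catProfile (t : ℝ) : ℝ := Real.log (t + Real.sqrt (t ^ 2 - 1))

/-- The norm of the horizontal projection `p z = (z₁, z₂)` of `z ∈ ℝ³`. -/
noncomputable def horizNorm (z : EuclideanSpace ℝ (Fin 3)) : ℝ :=
  Real.sqrt ((z 0) ^ 2 + (z 1) ^ 2)

/-- The catenoid-like surface `N = {z : ‖p z‖ ≥ 1 and |q z| = f (‖p z‖)}`. -/
def catSurface : Set (EuclideanSpace ℝ (Fin 3)) :=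
  {z | 1 ≤ horizNorm z ∧ |z 2| = catProfile (horizNorm z)}

/-! The two sheets of `N` are parametrized by `(θ, s) ↦ (cosh s cos θ, cosh s sin θ, ±s)`, since
`cosh (f t) = t`; on `0 ≤ s ≤ d` this map is `3 eᵈ`-Lipschitz. Because `f t ≤ log (2t)`, the set
`N ∩ B̄(0,R)` is covered by the layers where `log (2R) - |q|` lies in `[k, k + 1]`, `k ∈ ℕ`.
On the `k`-th layer the integrand is at most `(k + 1)²` and the area is
`O(e^{2(log (2R) - k)}) = O(R² e^{-2k})`, so the sum over `k` is `O(R²)`. -/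

open Real Set
open scoped ENNReal

lemma MeasureTheory.setLIntegral_le_tsum_mul_of_subset_iUnion {α ι : Type*} [MeasurableSpace α]
    [Countable ι] {μ : Measure α} {s : Set α} {P : ι → Set α} {f : α → ℝ≥0∞} {w : ι → ℝ≥0∞}
    (hs : s ⊆ ⋃ k, P k) (hf : ∀ k, ∀ x ∈ P k, f x ≤ w k) :
    ∫⁻ x in s, f x ∂μ ≤ ∑' k, w k * μ (P k) :=
  calc ∫⁻ x in s, f x ∂μ ≤ ∫⁻ x in ⋃ k, P k, f x ∂μ := lintegral_mono_set hs
    _ ≤ ∑' k, ∫⁻ x in P k, f x ∂μ := lintegral_iUnion_le _ _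
    _ ≤ ∑' k, ∫⁻ _ in P k, w k ∂μ :=
        ENNReal.tsum_le_tsum fun k => setLIntegral_mono measurable_const (hf k)
    _ = ∑' k, w k * μ (P k) := by simp only [setLIntegral_const]

lemma abs_mul_sub_mul_le {a b u v : ℝ} (hu : |u| ≤ 1) :
    |a * u - b * v| ≤ |a - b| + |b| * |u - v| :=
  calc |a * u - b * v| = |(a - b) * u + b * (u - v)| := by ring_nf
    _ ≤ |a - b| * |u| + |b| * |u - v| := by rw [← abs_mul, ← abs_mul]; exact abs_add_le _ _
    _ ≤ |a - b| + |b| * |u - v| := by gcongr; exact mul_le_of_le_one_right (abs_nonneg _) hu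

lemma Real.cosh_le_exp_of_nonneg {x : ℝ} (hx : 0 ≤ x) : cosh x ≤ exp x := by
  rw [cosh_eq]
  linarith [exp_le_exp.2 (show -x ≤ x by linarith)]

lemma Real.abs_cosh_sub_cosh_le {d a b : ℝ} (ha : a ∈ Icc 0 d) (hb : b ∈ Icc 0 d) :
    |cosh a - cosh b| ≤ exp d * |a - b| := by
  have hderiv : ∀ x ∈ Icc 0 d, ‖deriv cosh x‖ ≤ exp d := fun x hx => by
    rw [deriv_cosh, norm_eq_abs, abs_sinh, abs_of_nonneg hx.1]
    exact (sinh_lt_cosh _).le.trans <| (cosh_le_exp_of_nonneg hx.1).trans (exp_le_exp.2 hx.2)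
  simpa only [norm_eq_abs] using (convex_Icc 0 d).norm_image_sub_le_of_norm_deriv_le
    (fun x _ => differentiable_cosh x) hderiv hb ha

lemma one_le_add_sqrt_sq_sub_one {t : ℝ} (ht : 1 ≤ t) : 1 ≤ t + √(t ^ 2 - 1) := by
  linarith [sqrt_nonneg (t ^ 2 - 1)]

lemma catProfile_le_log_two_mul {t : ℝ} (ht : 1 ≤ t) : catProfile t ≤ log (2 * t) := by
  refine log_le_log (by linarith [one_le_add_sqrt_sq_sub_one ht]) ?_
  have : √(t ^ 2 - 1) ≤ t := sqrt_le_left (by linarith) |>.2 (by linarith)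
  linarith

lemma cosh_catProfile {t : ℝ} (ht : 1 ≤ t) : cosh (catProfile t) = t := by
  have hpos : 0 < t + √(t ^ 2 - 1) := by linarith [one_le_add_sqrt_sq_sub_one ht]
  have hsq : √(t ^ 2 - 1) ^ 2 = t ^ 2 - 1 := sq_sqrt (by nlinarith)
  have hinv : (t + √(t ^ 2 - 1))⁻¹ = t - √(t ^ 2 - 1) :=
    inv_eq_of_mul_eq_one_right (by nlinarith)
  rw [catProfile, cosh_log hpos, hinv]
  ring

lemma horizNorm_le_norm (z : EuclideanSpace ℝ (Fin 3)) : horizNorm z ≤ ‖z‖ := by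
  rw [EuclideanSpace.norm_eq, horizNorm, Fin.sum_univ_three]
  simp only [norm_eq_abs, sq_abs]
  exact sqrt_le_sqrt (by nlinarith [sq_nonneg (z 2)])

lemma abs_le_log_two_mul_of_mem_catSurface {z : EuclideanSpace ℝ (Fin 3)} (hz : z ∈ catSurface)
    {R : ℝ} (hzR : ‖z‖ ≤ R) : |z 2| ≤ log (2 * R) := by
  rw [hz.2]
  exact (catProfile_le_log_two_mul hz.1).trans <|
    log_le_log (by linarith [hz.1]) (by linarith [horizNorm_le_norm z])

noncomputable def catPar (ε : ℝ) (w : Fin 2 → ℝ) : EuclideanSpace ℝ (Fin 3) :=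
  !₂[cosh (w 1) * cos (w 0), cosh (w 1) * sin (w 0), ε * w 1]

lemma dist_catPar_le {ε d : ℝ} (hε : |ε| ≤ 1) {x y : Fin 2 → ℝ} (hx : x 1 ∈ Icc 0 d)
    (hy : y 1 ∈ Icc 0 d) : dist (catPar ε x) (catPar ε y) ≤ 3 * exp d * dist x y := by
  set δ := dist x y
  have hδ0 : |x 0 - y 0| ≤ δ := by simpa [Real.dist_eq] using dist_le_pi_dist x y 0
  have hδ1 : |x 1 - y 1| ≤ δ := by simpa [Real.dist_eq] using dist_le_pi_dist x y 1
  have hcosh : |cosh (x 1) - cosh (y 1)| ≤ exp d * δ :=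
    (abs_cosh_sub_cosh_le hx hy).trans (by gcongr)
  have hcoshy : |cosh (y 1)| ≤ exp d := by
    rw [abs_of_pos (cosh_pos _)]
    exact (cosh_le_exp_of_nonneg hy.1).trans (exp_le_exp.2 hy.2)
  have h0 : |cosh (x 1) * cos (x 0) - cosh (y 1) * cos (y 0)| ≤ 2 * exp d * δ := by
    have := abs_cos_sub_cos_le (x 0) (y 0)
    have := abs_mul_sub_mul_le (a := cosh (x 1)) (b := cosh (y 1)) (v := cos (y 0))
      (abs_cos_le_one (x 0))
    nlinarith [abs_nonneg (cosh (y 1)), abs_nonneg (cos (x 0) - cos (y 0)), exp_pos d]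
  have h1 : |cosh (x 1) * sin (x 0) - cosh (y 1) * sin (y 0)| ≤ 2 * exp d * δ := by
    have := abs_sin_sub_sin_le (x 0) (y 0)
    have := abs_mul_sub_mul_le (a := cosh (x 1)) (b := cosh (y 1)) (v := sin (y 0))
      (abs_sin_le_one (x 0))
    nlinarith [abs_nonneg (cosh (y 1)), abs_nonneg (sin (x 0) - sin (y 0)), exp_pos d]
  have h2 : |ε * x 1 - ε * y 1| ≤ exp d * δ := by
    rw [← mul_sub, abs_mul]
    have : 1 ≤ exp d := one_le_exp (hx.1.trans hx.2)
    nlinarith [abs_nonneg ε, abs_nonneg (x 1 - y 1)]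
  rw [EuclideanSpace.dist_eq, Fin.sum_univ_three, sqrt_le_left (by positivity)]
  simp only [catPar, Real.dist_eq, sq_abs, Matrix.cons_val_zero, Matrix.cons_val_one,
    Matrix.cons_val_two, Matrix.head_cons, Matrix.tail_cons]
  nlinarith [sq_le_sq' (abs_le.1 h0).1 (abs_le.1 h0).2, sq_le_sq' (abs_le.1 h1).1 (abs_le.1 h1).2,
    sq_le_sq' (abs_le.1 h2).1 (abs_le.1 h2).2]

lemma mem_image_catPar_of_mem_catSurface {z : EuclideanSpace ℝ (Fin 3)} (hz : z ∈ catSurface)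
    {c d : ℝ} (hc : c ≤ |z 2|) (hd : |z 2| ≤ d) :
    z ∈ catPar 1 '' Icc ![-π, c] ![π, d] ∪ catPar (-1) '' Icc ![-π, c] ![π, d] := by
  set ζ : ℂ := ⟨z 0, z 1⟩
  have hζ : ‖ζ‖ = cosh |z 2| := by
    rw [hz.2, cosh_catProfile hz.1, Complex.norm_def, Complex.normSq_mk, horizNorm]
    ring_nf
  have hζ0 : ζ ≠ 0 := norm_pos_iff.1 (hζ ▸ cosh_pos _)
  have hw : ![ζ.arg, |z 2|] ∈ Icc ![-π, c] ![π, d] := by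
    have hθ := Complex.arg_mem_Ioc ζ
    constructor <;> intro i <;> fin_cases i <;> simp [hθ.1.le, hθ.2, hc, hd]
  have hpar : ∀ ε : ℝ, ε * |z 2| = z 2 → catPar ε ![ζ.arg, |z 2|] = z := fun ε hε => by
    ext i
    fin_cases i
    · simp [catPar, Complex.cos_arg hζ0, hζ, ζ, mul_div_cancel₀ _ (cosh_pos _).ne']
    · simp [catPar, Complex.sin_arg, hζ, ζ, mul_div_cancel₀ _ (cosh_pos _).ne']
    · simpa [catPar] using hε
  rcases abs_choice (z 2) with h | h
  · exact Or.inl ⟨_, hw, hpar 1 (by rw [h, one_mul])⟩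
  · exact Or.inr ⟨_, hw, hpar (-1) (by rw [h]; ring)⟩

lemma lipschitzOnWith_catPar {ε : ℝ} (hε : |ε| ≤ 1) (d : ℝ) :
    LipschitzOnWith (3 * exp d).toNNReal (catPar ε) {w | w 1 ∈ Icc 0 d} :=
  .of_dist_le_mul fun _ hx _ hy => by
    rw [coe_toNNReal _ (by positivity)]
    exact dist_catPar_le hε hx hy

lemma hausdorffMeasure_catSurface_inter_abs_mem_Icc_le (c d : ℝ) :
    μH[2] (catSurface ∩ {z | |z 2| ∈ Icc c d}) ≤ ENNReal.ofReal (36 * π * exp d ^ 2 * (d - c)) := by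
  set D : Set (Fin 2 → ℝ) := Icc ![-π, max c 0] ![π, d]
  have hD : μH[2] D ≤ ENNReal.ofReal (2 * π * (d - c)) := by
    have hvol : (μH[2] : Measure (Fin 2 → ℝ)) = volume := by
      simpa using hausdorffMeasure_pi_real (ι := Fin 2)
    rw [hvol, Real.volume_Icc_pi, Fin.prod_univ_two, ← ENNReal.ofReal_mul (by simp [pi_pos.le])]
    simp only [Matrix.cons_val_zero, Matrix.cons_val_one, sub_neg_eq_add, ← two_mul]
    gcongr
    exact le_max_left c 0
  have himage : ∀ ε : ℝ, |ε| ≤ 1 →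
      μH[2] (catPar ε '' D) ≤ ENNReal.ofReal (18 * π * exp d ^ 2 * (d - c)) := fun ε hε => by
    have hDsub : D ⊆ {w | w 1 ∈ Icc 0 d} := fun w hw =>
      ⟨le_of_max_le_right (by simpa using hw.1 1), by simpa using hw.2 1⟩
    refine ((lipschitzOnWith_catPar hε d).mono hDsub
      |>.hausdorffMeasure_image_le zero_le_two).trans ?_
    rw [ENNReal.rpow_two, ← ENNReal.ofReal.eq_def, ← ENNReal.ofReal_pow (by positivity)]
    calc ENNReal.ofReal ((3 * exp d) ^ 2) * μH[2] D
        ≤ ENNReal.ofReal ((3 * exp d) ^ 2) * ENNReal.ofReal (2 * π * (d - c)) := by gcongr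
      _ ≤ ENNReal.ofReal (18 * π * exp d ^ 2 * (d - c)) := by
        rw [← ENNReal.ofReal_mul (by positivity)]
        exact le_of_eq (by ring_nf)
  calc μH[2] (catSurface ∩ {z | |z 2| ∈ Icc c d})
      ≤ μH[2] (catPar 1 '' D ∪ catPar (-1) '' D) := measure_mono fun z ⟨hz, hcd⟩ =>
        mem_image_catPar_of_mem_catSurface hz (max_le hcd.1 (abs_nonneg _)) hcd.2
    _ ≤ μH[2] (catPar 1 '' D) + μH[2] (catPar (-1) '' D) := measure_union_le _ _
    _ ≤ ENNReal.ofReal (18 * π * exp d ^ 2 * (d - c))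
        + ENNReal.ofReal (18 * π * exp d ^ 2 * (d - c)) :=
        add_le_add (himage 1 (by norm_num)) (himage (-1) (by norm_num))
    _ = ENNReal.ofReal (36 * π * exp d ^ 2 * (d - c)) := by
        rw [← two_mul, ← ENNReal.ofReal_ofNat 2, ← ENNReal.ofReal_mul zero_le_two]
        ring_nf

lemma sq_add_one_mul_exp_neg_sq_le (k : ℕ) : ((k : ℝ) + 1) ^ 2 * exp (-k) ^ 2 ≤ 2 * 2⁻¹ ^ k := by
  have hquad : ((k : ℝ) + 1) ^ 2 ≤ 2 * exp k := by
    nlinarith [quadratic_le_exp_of_nonneg (Nat.cast_nonneg (α := ℝ) k)]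
  have hexp : exp (-k) ≤ 2⁻¹ ^ k := by
    rw [neg_eq_neg_one_mul, mul_comm, exp_nat_mul, exp_neg]
    gcongr
    linarith [add_one_le_exp 1]
  calc ((k : ℝ) + 1) ^ 2 * exp (-k) ^ 2 ≤ 2 * exp k * exp (-k) * exp (-k) := by
        rw [mul_assoc _ (exp (-k)), ← sq]; gcongr
    _ = 2 * exp (-k) := by rw [mul_assoc 2, ← exp_add, add_neg_cancel, exp_zero, mul_one]
    _ ≤ 2 * 2⁻¹ ^ k := by gcongr

def catLayer (R : ℝ) (k : ℕ) : Set (EuclideanSpace ℝ (Fin 3)) :=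
  catSurface ∩ {z | |z 2| ∈ Icc (log (2 * R) - k - 1) (log (2 * R) - k)}

lemma catSurface_inter_closedBall_subset_iUnion_catLayer (R : ℝ) :
    catSurface ∩ closedBall 0 R ⊆ ⋃ k, catLayer R k := by
  rintro z ⟨hz, hzR⟩
  have hzL := abs_le_log_two_mul_of_mem_catSurface hz (by simpa using hzR)
  refine mem_iUnion.2 ⟨⌊log (2 * R) - |z 2|⌋₊, hz, ?_, ?_⟩ <;>
    linarith [Nat.floor_le (sub_nonneg.2 hzL), Nat.lt_floor_add_one (log (2 * R) - |z 2|)]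

lemma sq_abs_sub_log_le_of_mem_catLayer {R : ℝ} {k : ℕ} {z : EuclideanSpace ℝ (Fin 3)}
    (hz : z ∈ catLayer R k) : (|z 2| - log (2 * R)) ^ 2 ≤ ((k : ℝ) + 1) ^ 2 :=
  sq_le_sq' (by linarith [hz.2.1]) (by linarith [hz.2.2])

lemma ofReal_mul_hausdorffMeasure_catLayer_le {R : ℝ} (hR : 0 < R) (k : ℕ) :
    ENNReal.ofReal (((k : ℝ) + 1) ^ 2) * μH[2] (catLayer R k) ≤
      ENNReal.ofReal (288 * π * R ^ 2) * 2⁻¹ ^ k := by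
  have hexp : exp (log (2 * R) - k) = 2 * R * exp (-k) := by
    rw [exp_sub, exp_log (by positivity), div_eq_mul_inv, ← exp_neg]
  calc _ ≤ ENNReal.ofReal (((k : ℝ) + 1) ^ 2) * ENNReal.ofReal
        (36 * π * exp (log (2 * R) - k) ^ 2 * (log (2 * R) - k - (log (2 * R) - k - 1))) := by
        gcongr; exact hausdorffMeasure_catSurface_inter_abs_mem_Icc_le _ _
    _ = ENNReal.ofReal (144 * π * R ^ 2 * (((k : ℝ) + 1) ^ 2 * exp (-k) ^ 2)) := by
        rw [← ENNReal.ofReal_mul (by positivity), hexp]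
        ring_nf
    _ ≤ ENNReal.ofReal (144 * π * R ^ 2 * (2 * 2⁻¹ ^ k)) := by
        gcongr ENNReal.ofReal (_ * ?_)
        exact sq_add_one_mul_exp_neg_sq_le k
    _ = ENNReal.ofReal (288 * π * R ^ 2) * 2⁻¹ ^ k := by
        rw [← mul_assoc, ENNReal.ofReal_mul (by positivity), ENNReal.ofReal_pow (by norm_num),
          ENNReal.ofReal_inv_of_pos two_pos, ENNReal.ofReal_ofNat]
        ring_nf

/-- There is a universal constant `Γ ∈ (0, ∞)` such that for all `R ≥ 2`,
`∫_{N ∩ B̄(0,R)} (|q z| - log (2R))² dℋ² ≤ Γ R²`. -/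
theorem catenoid_height_estimate :
    ∃ Γ : ℝ, 0 < Γ ∧ ∀ R : ℝ, 2 ≤ R →
      ∫⁻ z in catSurface ∩ closedBall (0 : EuclideanSpace ℝ (Fin 3)) R,
          ENNReal.ofReal ((|z 2| - Real.log (2 * R)) ^ 2) ∂ μH[2] ≤
        ENNReal.ofReal (Γ * R ^ 2) := by
  refine ⟨576 * π, by positivity, fun R hR => ?_⟩
  calc _ ≤ ∑' k : ℕ, ENNReal.ofReal (((k : ℝ) + 1) ^ 2) * μH[2] (catLayer R k) :=
        setLIntegral_le_tsum_mul_of_subset_iUnion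
          (catSurface_inter_closedBall_subset_iUnion_catLayer R)
          fun k _ hz => ENNReal.ofReal_le_ofReal (sq_abs_sub_log_le_of_mem_catLayer hz)
    _ ≤ ∑' k : ℕ, ENNReal.ofReal (288 * π * R ^ 2) * 2⁻¹ ^ k :=
        ENNReal.tsum_le_tsum fun k => ofReal_mul_hausdorffMeasure_catLayer_le (by linarith) k
    _ = ENNReal.ofReal (576 * π * R ^ 2) := by
        rw [ENNReal.tsum_mul_left, ENNReal.tsum_geometric, ENNReal.one_sub_inv_two, inv_inv,
          ← ENNReal.ofReal_ofNat 2, ← ENNReal.ofReal_mul (by positivity)]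
        ring_nf
end
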